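/- Let ε > 0. For every polynomial p of degree at most n, ‖p − Q_ε(p)‖_{m,2} ≤ ε·‖p‖_w. -/

import Mathlib

open MeasureTheory Finset

noncomputable section

/-- The equispaced node `x_k = -1 + 2k/m` in `[-1,1]`. -/
def node (m k : ℕ) : ℝ := -1 + 2 * (k : ℝ) / (m : ℝ)

/-- The discrete semi-inner product `⟨f,g⟩_{m,2} = (2/(m+1)) Σ_{k=0}^m f(x_k) conj(g(x_k))`. -/
def discInner (m : ℕ) (f g : ℝ → ℂ) : ℂ :=
  (2 / ((m : ℂ) + 1)) * ∑ k ∈ Finset.range (m + 1), f (node m k) * (starRingEnd ℂ) (g (node m k))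

/-- The discrete `ℓ²` semi-norm `‖f‖_{m,2}`. -/
def discNorm (m : ℕ) (f : ℝ → ℂ) : ℝ :=
  Real.sqrt ((2 / ((m : ℝ) + 1)) * ∑ k ∈ Finset.range (m + 1), ‖f (node m k)‖ ^ 2)

/-- The discrete sup semi-norm `‖f‖_{m,∞} = max_{0 ≤ k ≤ m} |f(x_k)|`. -/
def discSup (m : ℕ) (f : ℝ → ℂ) : ℝ :=
  ⨆ k : Fin (m + 1), ‖f (node m (k : ℕ))‖

/-- The uniform norm `‖f‖_{I,∞} = sup_{x ∈ I} |f(x)|`. -/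
def supNorm (I : Set ℝ) (f : ℝ → ℂ) : ℝ :=
  ⨆ x : I, ‖f (x : ℝ)‖

/-- The Jacobi-type weight `w_γ^{(α,β)}(x) = (1 - x/γ)^α (1 + x/γ)^β`. -/
def jweight (α β γ x : ℝ) : ℝ := (1 - x / γ) ^ α * (1 + x / γ) ^ β

/-- The weighted `L²` inner product `⟨f,g⟩_w = ∫_{-γ}^{γ} f conj(g) w_γ^{(α,β)}`. -/
def wInner (α β γ : ℝ) (f g : ℝ → ℂ) : ℂ :=
  ∫ x in (-γ)..γ, f x * (starRingEnd ℂ) (g x) * ((jweight α β γ x : ℝ) : ℂ)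

/-- The weighted `L²` norm `‖f‖_w`. -/
def wNorm (α β γ : ℝ) (f : ℝ → ℂ) : ℝ :=
  Real.sqrt (∫ x in (-γ)..γ, ‖f x‖ ^ 2 * jweight α β γ x)

/-- `h₀^{(α,β)} = 2^{α+β+1} Γ(α+1) Γ(β+1) / ((α+β+1) Γ(α+β+1))`. -/
def h0 (α β : ℝ) : ℝ :=
  2 ^ (α + β + 1) * Real.Gamma (α + 1) * Real.Gamma (β + 1) /
    ((α + β + 1) * Real.Gamma (α + β + 1))

/-- A complex polynomial regarded as a function of a real variable. -/
def pf (p : Polynomial ℂ) : ℝ → ℂ := fun x => p.eval (x : ℂ)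

/-- The constant `c_{n,γ,α,β} = max_{x ∈ [-γ,γ]} (Σ_{i=0}^n |φ_i(x)|²)^{1/2}`. -/
def cConst (n : ℕ) (γ : ℝ) (φ : ℕ → Polynomial ℂ) : ℝ :=
  ⨆ x : Set.Icc (-γ) γ,
    Real.sqrt (∑ i ∈ Finset.range (n + 1), ‖pf (φ i) (x : ℝ)‖ ^ 2)

/-- The regularized frame approximation operator
`Q_δ(f) = Σ_{i : σ_i > δ} σ_i^{-2} ⟨f,ζ_i⟩_{m,2} ζ_i`. -/
def Qop (m n : ℕ) (ζ : Fin (n + 1) → Polynomial ℂ) (σ : Fin (n + 1) → ℝ) (δ : ℝ)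
    (f : ℝ → ℂ) : ℝ → ℂ :=
  fun x => ∑ i ∈ Finset.univ.filter (fun i : Fin (n + 1) => δ < σ i),
    (discInner m f (pf (ζ i)) / ((σ i ^ 2 : ℝ) : ℂ)) * pf (ζ i) x

/-- The quantity `C(m,n,γ,δ) = sup{‖p‖_{[-1,1],∞} : p ∈ P_n, ‖p‖_{m,∞} ≤ 1,
‖p‖_{[-γ,γ],∞} ≤ δ⁻¹}`. -/
def Cquant (m n : ℕ) (γ δ : ℝ) : ℝ :=
  sSup {r : ℝ | ∃ p : Polynomial ℂ, p.natDegree ≤ n ∧ discSup m (pf p) ≤ 1 ∧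
    supNorm (Set.Icc (-γ) γ) (pf p) ≤ δ⁻¹ ∧ r = supNorm (Set.Icc (-1) 1) (pf p)}

/-- The constant `C₁ = sup{‖p‖_{[-1,1],∞} : p ∈ span{ζ_i : σ_i > ε}, ‖p‖_{m,∞} ≤ 1}`. -/
def C1const (m n : ℕ) (ζ : Fin (n + 1) → Polynomial ℂ) (σ : Fin (n + 1) → ℝ) (ε : ℝ) : ℝ :=
  sSup {r : ℝ | ∃ p : Polynomial ℂ, p ∈ Submodule.span ℂ (ζ '' {i | ε < σ i}) ∧
    discSup m (pf p) ≤ 1 ∧ r = supNorm (Set.Icc (-1) 1) (pf p)}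

/-- The constant `C₂ = sup{‖p - Q_ε(p)‖_{[-1,1],∞} : p ∈ P_n, ‖p‖_{[-γ,γ],∞} ≤ ε⁻¹}`. -/
def C2const (m n : ℕ) (γ : ℝ) (ζ : Fin (n + 1) → Polynomial ℂ) (σ : Fin (n + 1) → ℝ)
    (ε : ℝ) : ℝ :=
  sSup {r : ℝ | ∃ p : Polynomial ℂ, p.natDegree ≤ n ∧
    supNorm (Set.Icc (-γ) γ) (pf p) ≤ ε⁻¹ ∧
    r = supNorm (Set.Icc (-1) 1) (fun x => pf p x - Qop m n ζ σ ε (pf p) x)}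

/-- The condition number `κ(Q_δ) = sup{‖Q_δ(q)‖_{[-1,1],∞} : q ∈ C([-1,1]), ‖q‖_{m,∞} ≤ 1}`. -/
def kappa (m n : ℕ) (ζ : Fin (n + 1) → Polynomial ℂ) (σ : Fin (n + 1) → ℝ) (δ : ℝ) : ℝ :=
  sSup {r : ℝ | ∃ q : ℝ → ℂ, ContinuousOn q (Set.Icc (-1) 1) ∧ discSup m q ≤ 1 ∧
    r = supNorm (Set.Icc (-1) 1) (Qop m n ζ σ δ q)}

/-- The Bernstein ellipse `E_θ = {(z + z⁻¹)/2 : 1 ≤ |z| ≤ θ}`. -/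
def bernsteinEllipse (θ : ℝ) : Set ℂ :=
  {w | ∃ z : ℂ, 1 ≤ ‖z‖ ∧ ‖z‖ ≤ θ ∧ w = (z + z⁻¹) / 2}

/-- The uniform norm on a subset of `ℂ`. -/
def supNormC (E : Set ℂ) (f : ℂ → ℂ) : ℝ :=
  ⨆ z : E, ‖f (z : ℂ)‖

/-- The `C^k` norm `‖f‖_{C^k([-1,1])} = max_{0 ≤ j ≤ k} ‖f^{(j)}‖_{[-1,1],∞}`. -/
def CkNorm (k : ℕ) (f : ℝ → ℂ) : ℝ :=
  ⨆ j : Fin (k + 1), supNorm (Set.Icc (-1) 1) (iteratedDerivWithin (j : ℕ) f (Set.Icc (-1) 1))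

/-! Write `p = ∑ cᵢ ζᵢ`. Discrete orthogonality makes `Q_ε` keep exactly the terms with `σᵢ > ε`,
so `p - Q_ε p = ∑_{σᵢ ≤ ε} cᵢ ζᵢ`, whose squared discrete norm is `∑_{σᵢ ≤ ε} |cᵢ|² σᵢ²`; this is at
most `ε² ∑ |cᵢ|² = ε² ‖p‖_w²` by orthonormality in the weighted inner product. -/

section OrthogonalExpansion

variable {V ι : Type*} [AddCommMonoid V] [Module ℂ V] [DecidableEq ι]
  (B : V →ₗ[ℂ] V → ℂ) {v : ι → V} {w : ι → ℝ}

theorem apply_sum_smul_of_orthogonal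
    (horth : ∀ i j, B (v i) (v j) = if i = j then (w i : ℂ) else 0)
    {s : Finset ι} (c : ι → ℂ) {i : ι} (hi : i ∈ s) :
    B (∑ j ∈ s, c j • v j) (v i) = c i * w i := by
  simp [map_sum, map_smul, Finset.sum_apply, horth, hi]

theorem apply_sum_smul_self_of_orthogonal
    (hsymm : ∀ x y, B y x = starRingEnd ℂ (B x y))
    (horth : ∀ i j, B (v i) (v j) = if i = j then (w i : ℂ) else 0)
    (s : Finset ι) (c : ι → ℂ) :
    B (∑ i ∈ s, c i • v i) (∑ i ∈ s, c i • v i) = ((∑ i ∈ s, ‖c i‖ ^ 2 * w i : ℝ) : ℂ) := by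
  rw [map_sum, Finset.sum_apply]
  push_cast
  refine Finset.sum_congr rfl fun i hi => ?_
  rw [map_smul, Pi.smul_apply, smul_eq_mul, hsymm, apply_sum_smul_of_orthogonal B horth c hi,
    map_mul, Complex.conj_ofReal, ← mul_assoc, Complex.mul_conj, Complex.normSq_eq_norm_sq]
  push_cast
  ring

end OrthogonalExpansion

theorem pf_add (p q : Polynomial ℂ) : pf (p + q) = pf p + pf q := by
  funext x; simp [pf]

theorem pf_smul (a : ℂ) (p : Polynomial ℂ) : pf (a • p) = a • pf p := by
  funext x; simp [pf]

theorem continuous_pf (p : Polynomial ℂ) : Continuous (pf p) :=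
  (Polynomial.continuous p).comp Complex.continuous_ofReal

section Discrete

theorem discInner_add_left (m : ℕ) (f g h : ℝ → ℂ) :
    discInner m (f + g) h = discInner m f h + discInner m g h := by
  simp only [discInner, Pi.add_apply, add_mul, Finset.sum_add_distrib, mul_add]

theorem discInner_smul_left (m : ℕ) (a : ℂ) (f h : ℝ → ℂ) :
    discInner m (a • f) h = a * discInner m f h := by
  simp only [discInner, Pi.smul_apply, smul_eq_mul, mul_assoc, ← Finset.mul_sum]
  ring

theorem discInner_conj_symm (m : ℕ) (f g : ℝ → ℂ) :
    discInner m g f = starRingEnd ℂ (discInner m f g) := by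
  simp [discInner, map_sum, map_div₀, map_ofNat, mul_comm]

theorem discNorm_eq_sqrt_re_discInner (m : ℕ) (f : ℝ → ℂ) :
    discNorm m f = √(discInner m f f).re := by
  have h : discInner m f f
      = ((2 / ((m : ℝ) + 1) * ∑ k ∈ Finset.range (m + 1), ‖f (node m k)‖ ^ 2 : ℝ) : ℂ) := by
    simp [discInner, Complex.mul_conj, Complex.normSq_eq_norm_sq]
  rw [discNorm, h, Complex.ofReal_re]

def discForm (m : ℕ) : Polynomial ℂ →ₗ[ℂ] Polynomial ℂ → ℂ where
  toFun p q := discInner m (pf p) (pf q)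
  map_add' p q := funext fun r => by rw [pf_add, discInner_add_left]; rfl
  map_smul' a p := funext fun r => by rw [pf_smul, discInner_smul_left]; rfl

@[simp]
theorem discForm_apply (m : ℕ) (p q : Polynomial ℂ) :
    discForm m p q = discInner m (pf p) (pf q) := rfl

end Discrete

theorem jweight_neg (α β γ x : ℝ) : jweight α β γ (-x) = jweight β α γ x := by
  simp only [jweight, neg_div, sub_neg_eq_add, ← sub_eq_add_neg]
  ring

section Weighted

variable {α β γ : ℝ}

theorem intervalIntegrable_jweight_zero_left (hα : -1 < α) (hγ : 0 < γ) :
    IntervalIntegrable (jweight α β γ) volume 0 γ := by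
  have h1 : IntervalIntegrable (fun x : ℝ => (1 - x) ^ α) volume 0 1 := by
    simpa using (intervalIntegral.intervalIntegrable_rpow' hα (a := 1) (b := 0)).comp_sub_left 1
  have h2 : IntervalIntegrable (fun x : ℝ => (1 - x / γ) ^ α) volume 0 γ := by
    simpa [div_eq_mul_inv, hγ.ne'] using h1.comp_mul_right (c := γ⁻¹)
  refine h2.mul_continuousOn (ContinuousOn.rpow_const (by fun_prop) fun x hx => Or.inl ?_)
  rw [Set.uIcc_of_le hγ.le] at hx
  have : 0 ≤ x / γ := div_nonneg hx.1 hγ.le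
  linarith

theorem intervalIntegrable_jweight (hα : -1 < α) (hβ : -1 < β) (hγ : 0 < γ) :
    IntervalIntegrable (jweight α β γ) volume (-γ) γ := by
  have hneg : IntervalIntegrable (jweight α β γ) volume 0 (-γ) := by
    rw [IntervalIntegrable.iff_comp_neg]
    simpa [jweight_neg] using intervalIntegrable_jweight_zero_left (β := α) hβ hγ
  exact hneg.symm.trans (intervalIntegrable_jweight_zero_left hα hγ)

theorem intervalIntegrable_mul_jweight (hα : -1 < α) (hβ : -1 < β) (hγ : 0 < γ) {g : ℝ → ℂ}
    (hg : Continuous g) :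
    IntervalIntegrable (fun x => g x * ((jweight α β γ x : ℝ) : ℂ)) volume (-γ) γ := by
  have h := intervalIntegrable_jweight hα hβ hγ
  have hC : IntervalIntegrable (fun x => ((jweight α β γ x : ℝ) : ℂ)) volume (-γ) γ :=
    ⟨h.1.ofReal, h.2.ofReal⟩
  exact hC.continuousOn_mul hg.continuousOn

theorem wInner_add_left (hα : -1 < α) (hβ : -1 < β) (hγ : 0 < γ) {f g h : ℝ → ℂ}
    (hf : Continuous f) (hg : Continuous g) (hh : Continuous h) :
    wInner α β γ (f + g) h = wInner α β γ f h + wInner α β γ g h := by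
  simp only [wInner, Pi.add_apply, add_mul]
  exact intervalIntegral.integral_add
    (intervalIntegrable_mul_jweight hα hβ hγ (hf.mul (by fun_prop)))
    (intervalIntegrable_mul_jweight hα hβ hγ (hg.mul (by fun_prop)))

theorem wInner_smul_left (a : ℂ) (f h : ℝ → ℂ) :
    wInner α β γ (a • f) h = a * wInner α β γ f h := by
  simp only [wInner, Pi.smul_apply, smul_eq_mul, mul_assoc, intervalIntegral.integral_const_mul]

theorem wInner_conj_symm (f g : ℝ → ℂ) :
    wInner α β γ g f = starRingEnd ℂ (wInner α β γ f g) := by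
  simp only [wInner, intervalIntegral, map_sub, ← integral_conj, map_mul, Complex.conj_conj,
    Complex.conj_ofReal, mul_comm (g _)]

theorem wNorm_eq_sqrt_re_wInner (f : ℝ → ℂ) :
    wNorm α β γ f = √(wInner α β γ f f).re := by
  have h : wInner α β γ f f = ((∫ x in (-γ)..γ, ‖f x‖ ^ 2 * jweight α β γ x : ℝ) : ℂ) := by
    rw [wInner, ← intervalIntegral.integral_ofReal]
    refine intervalIntegral.integral_congr fun x _ => ?_
    simp [Complex.mul_conj, Complex.normSq_eq_norm_sq]
  rw [wNorm, h, Complex.ofReal_re]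

def weightedForm (hα : -1 < α) (hβ : -1 < β) (hγ : 0 < γ) :
    Polynomial ℂ →ₗ[ℂ] Polynomial ℂ → ℂ where
  toFun p q := wInner α β γ (pf p) (pf q)
  map_add' p q := funext fun r => by
    rw [pf_add, wInner_add_left hα hβ hγ (continuous_pf p) (continuous_pf q) (continuous_pf r)]
    rfl
  map_smul' a p := funext fun r => by rw [pf_smul, wInner_smul_left]; rfl

@[simp]
theorem weightedForm_apply (hα : -1 < α) (hβ : -1 < β) (hγ : 0 < γ) (p q : Polynomial ℂ) :
    weightedForm hα hβ hγ p q = wInner α β γ (pf p) (pf q) := rfl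

end Weighted

theorem pf_sum_smul {ι : Type*} (s : Finset ι) (c : ι → ℂ) (ζ : ι → Polynomial ℂ) (x : ℝ) :
    pf (∑ i ∈ s, c i • ζ i) x = ∑ i ∈ s, c i * pf (ζ i) x := by
  simp [pf, Polynomial.eval_finsetSum]

section Expansion

variable {ι : Type*} [DecidableEq ι] {ζ : ι → Polynomial ℂ}

theorem discNorm_pf_sum_smul {m : ℕ} {σ : ι → ℝ}
    (hζd : ∀ i j, discInner m (pf (ζ i)) (pf (ζ j)) = if i = j then ((σ i ^ 2 : ℝ) : ℂ) else 0)
    (s : Finset ι) (c : ι → ℂ) :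
    discNorm m (pf (∑ i ∈ s, c i • ζ i)) = √(∑ i ∈ s, ‖c i‖ ^ 2 * σ i ^ 2) := by
  rw [discNorm_eq_sqrt_re_discInner]
  have h := apply_sum_smul_self_of_orthogonal (discForm m) (w := fun i => σ i ^ 2)
    (fun _ _ => discInner_conj_symm m _ _) hζd s c
  rw [← discForm_apply, h, Complex.ofReal_re]

theorem wNorm_pf_sum_smul {α β γ : ℝ} (hα : -1 < α) (hβ : -1 < β) (hγ : 0 < γ)
    (hζw : ∀ i j, wInner α β γ (pf (ζ i)) (pf (ζ j)) = if i = j then 1 else 0)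
    (s : Finset ι) (c : ι → ℂ) :
    wNorm α β γ (pf (∑ i ∈ s, c i • ζ i)) = √(∑ i ∈ s, ‖c i‖ ^ 2) := by
  rw [wNorm_eq_sqrt_re_wInner]
  have h := apply_sum_smul_self_of_orthogonal (weightedForm hα hβ hγ) (w := fun _ => 1)
    (fun _ _ => wInner_conj_symm _ _) (fun i j => by simpa using hζw i j) s c
  rw [← weightedForm_apply hα hβ hγ, h, Complex.ofReal_re]
  simp only [mul_one]

end Expansion

theorem sub_Qop_pf_sum_smul {m n : ℕ} {ζ : Fin (n + 1) → Polynomial ℂ} {σ : Fin (n + 1) → ℝ}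
    (hσ : ∀ i, σ i ≠ 0)
    (hζd : ∀ i j, discInner m (pf (ζ i)) (pf (ζ j)) = if i = j then ((σ i ^ 2 : ℝ) : ℂ) else 0)
    (δ : ℝ) (c : Fin (n + 1) → ℂ) :
    (fun x => pf (∑ i, c i • ζ i) x - Qop m n ζ σ δ (pf (∑ i, c i • ζ i)) x)
      = pf (∑ i ∈ univ.filter (fun i => ¬ δ < σ i), c i • ζ i) := by
  have hQ : Qop m n ζ σ δ (pf (∑ i, c i • ζ i)) = pf (∑ i ∈ univ.filter (δ < σ ·), c i • ζ i) := by
    funext x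
    rw [Qop, pf_sum_smul]
    refine Finset.sum_congr rfl fun i _ => ?_
    have hi := apply_sum_smul_of_orthogonal (discForm m) (w := fun i => σ i ^ 2) hζd c
      (Finset.mem_univ i)
    have hσi : ((σ i ^ 2 : ℝ) : ℂ) ≠ 0 := by exact_mod_cast pow_ne_zero 2 (hσ i)
    rw [← discForm_apply, hi, mul_div_cancel_right₀ _ hσi]
  rw [hQ, ← Finset.sum_filter_add_sum_filter_not univ (δ < σ ·)]
  funext x
  simp [pf_add]

theorem sum_filter_not_lt_mul_sq_le {ι : Type*} (s : Finset ι) {a σ : ι → ℝ} (ha : ∀ i, 0 ≤ a i)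
    (hσ : ∀ i, 0 ≤ σ i) (ε : ℝ) :
    ∑ i ∈ s.filter (fun i => ¬ ε < σ i), a i * σ i ^ 2 ≤ ε ^ 2 * ∑ i ∈ s, a i := by
  rw [Finset.mul_sum]
  calc ∑ i ∈ s.filter (fun i => ¬ ε < σ i), a i * σ i ^ 2
      ≤ ∑ i ∈ s.filter (fun i => ¬ ε < σ i), ε ^ 2 * a i := by
        refine Finset.sum_le_sum fun i hi => ?_
        have hσε : σ i ≤ ε := not_lt.mp (Finset.mem_filter.mp hi).2
        rw [mul_comm (ε ^ 2)]
        exact mul_le_mul_of_nonneg_left (pow_le_pow_left₀ (hσ i) hσε 2) (ha i)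
    _ ≤ ∑ i ∈ s, ε ^ 2 * a i :=
        Finset.sum_le_sum_of_subset_of_nonneg (Finset.filter_subset _ _) fun i _ _ => by
          have := ha i; positivity

theorem stmt9_general (α β γ : ℝ) (hα : -1 < α) (hβ : -1 < β) (hγ : 1 < γ)
    (m n : ℕ)
    (ζ : Fin (n + 1) → Polynomial ℂ) (σ : Fin (n + 1) → ℝ) (hσ : ∀ i, 0 < σ i)
    (hζspan : ∀ p : Polynomial ℂ, p.natDegree ≤ n → p ∈ Submodule.span ℂ (Set.range ζ))
    (hζw : ∀ i j, wInner α β γ (pf (ζ i)) (pf (ζ j)) = if i = j then 1 else 0)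
    (hζd : ∀ i j, discInner m (pf (ζ i)) (pf (ζ j)) =
      if i = j then (((σ i) ^ 2 : ℝ) : ℂ) else 0)
    (ε : ℝ) (hε : 0 < ε)
    (p : Polynomial ℂ) (hp : p.natDegree ≤ n) :
    discNorm m (fun x => pf p x - Qop m n ζ σ ε (pf p) x) ≤ ε * wNorm α β γ (pf p) := by
  obtain ⟨c, rfl⟩ := (Submodule.mem_span_range_iff_exists_fun ℂ).mp (hζspan p hp)
  rw [sub_Qop_pf_sum_smul (fun i => (hσ i).ne') hζd, discNorm_pf_sum_smul hζd,
    wNorm_pf_sum_smul hα hβ (by linarith) hζw]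
  calc √(∑ i ∈ univ.filter (fun i => ¬ ε < σ i), ‖c i‖ ^ 2 * σ i ^ 2)
      ≤ √(ε ^ 2 * ∑ i, ‖c i‖ ^ 2) :=
        Real.sqrt_le_sqrt (sum_filter_not_lt_mul_sq_le _ (fun _ => by positivity)
          (fun i => (hσ i).le) ε)
    _ = ε * √(∑ i, ‖c i‖ ^ 2) := by rw [Real.sqrt_mul (sq_nonneg ε), Real.sqrt_sq hε.le]

/-- `‖p − Q_ε(p)‖_{m,2} ≤ ε ‖p‖_w` for every polynomial of degree at most
`n`. -/
theorem stmt9 (α β γ : ℝ) (hα : -1 < α) (hβ : -1 < β) (hγ : 1 < γ)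
    (m n : ℕ) (hn : 1 ≤ n) (hmn : n ≤ m)
    (ζ : Fin (n + 1) → Polynomial ℂ) (σ : Fin (n + 1) → ℝ) (hσ : ∀ i, 0 < σ i)
    (hζdeg : ∀ i, (ζ i).natDegree ≤ n)
    (hζspan : ∀ p : Polynomial ℂ, p.natDegree ≤ n → p ∈ Submodule.span ℂ (Set.range ζ))
    (hζw : ∀ i j, wInner α β γ (pf (ζ i)) (pf (ζ j)) = if i = j then 1 else 0)
    (hζd : ∀ i j, discInner m (pf (ζ i)) (pf (ζ j)) =
      if i = j then (((σ i) ^ 2 : ℝ) : ℂ) else 0)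
    (ε : ℝ) (hε : 0 < ε)
    (p : Polynomial ℂ) (hp : p.natDegree ≤ n) :
    discNorm m (fun x => pf p x - Qop m n ζ σ ε (pf p) x) ≤ ε * wNorm α β γ (pf p) :=
  stmt9_general α β γ hα hβ hγ m n ζ σ hσ hζspan hζw hζd ε hε p hp
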